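/- Let V and W be compactly supported persistence modules over a field K, each equipped with an automorphism of persistence modules A_V, A_W satisfying A_V^p = id, A_W^p = id (Z/p-actions). Then for the multiplicity-sensitive spread μ_p one has |μ_p(V) - μ_p(W)| ≤ d̂_inter(V, W), where d̂_inter is the equivariant interleaving distance. -/
import Mathlib


universe u

/-- A `ℤ/p` persistence module over a field `K`: a compactly supported, pointwise
finite-dimensional persistence module `(V, θ)` of `K`-vector spaces indexed by `ℝ`
together with an automorphism `A` of persistence modules satisfying `A ^ p = id`. -/
structure ZpPersMod (K : Type u) [Field K] (p : ℕ) : Type (u + 1) where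
  V : ℝ → Type u
  [addgrp : ∀ t, AddCommGroup (V t)]
  [mod : ∀ t, Module K (V t)]
  [fd : ∀ t, FiniteDimensional K (V t)]
  θ : ∀ s t : ℝ, V s →ₗ[K] V t
  θ_id : ∀ t, θ t t = LinearMap.id
  θ_comp : ∀ s t r : ℝ, s ≤ t → t ≤ r → (θ t r).comp (θ s t) = θ s r
  supp : ∃ T : ℝ, ∀ t : ℝ, T < |t| → ∀ v : V t, v = 0
  A : ∀ t, V t →ₗ[K] V t
  hAθ : ∀ s t : ℝ, (A t).comp (θ s t) = (θ s t).comp (A s)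
  hAp : ∀ t, (A t) ^ p = 1

attribute [instance] ZpPersMod.addgrp ZpPersMod.mod ZpPersMod.fd

variable (K : Type u) [Field K] (p : ℕ)

/-- The multiplicity function of the barcode of the `ζ`-eigenspace persistence
module of `M`: the number of bars containing the interval `(a, b]`, i.e. the rank
of the persistence map of the `ζ`-eigenspace module from `a` to `b`. -/
noncomputable def eigMult (M : ZpPersMod K p) (ζ : K) (a b : ℝ) : ℕ :=
  Module.finrank K
    ((LinearMap.ker (M.A a - ζ • (1 : M.V a →ₗ[K] M.V a))).map (M.θ a b))

/-- The multiplicity-sensitive spread `μ_p` of a `ℤ/p` persistence module: the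
supremum, over primitive `p`-th roots of unity `ζ` and constants `c ≥ 0`, of those
`c` for which there is an interval `I` of length `> 4c` with
`m(B(L_ζ), I) = m(B(L_ζ), I^{2c}) = l` and `l` not divisible by `p`. -/
noncomputable def muP (M : ZpPersMod K p) : ℝ :=
  sSup {c : ℝ | 0 ≤ c ∧ ∃ ζ : K, IsPrimitiveRoot ζ p ∧ ∃ a b : ℝ,
    4 * c < b - a ∧
    eigMult K p M ζ a b = eigMult K p M ζ (a + 2 * c) (b - 2 * c) ∧
    ¬ p ∣ eigMult K p M ζ a b}

/-- An equivariant `δ`-interleaving between `ℤ/p` persistence modules `M` and `N`: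
an interleaving in the usual sense which commutes with the `ℤ/p`-actions. -/
structure EquivInterleaving (M N : ZpPersMod K p) (δ : ℝ) : Type u where
  f : ∀ t : ℝ, M.V t →ₗ[K] N.V (t + δ)
  g : ∀ t : ℝ, N.V t →ₗ[K] M.V (t + δ)
  f_nat : ∀ s t : ℝ, s ≤ t → (f t).comp (M.θ s t) = (N.θ (s + δ) (t + δ)).comp (f s)
  g_nat : ∀ s t : ℝ, s ≤ t → (g t).comp (N.θ s t) = (M.θ (s + δ) (t + δ)).comp (g s)
  f_equiv : ∀ t : ℝ, (f t).comp (M.A t) = (N.A (t + δ)).comp (f t)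
  g_equiv : ∀ t : ℝ, (g t).comp (N.A t) = (M.A (t + δ)).comp (g t)
  gf : ∀ t : ℝ, (g (t + δ)).comp (f t) = M.θ t (t + δ + δ)
  fg : ∀ t : ℝ, (f (t + δ)).comp (g t) = N.θ t (t + δ + δ)

/-- The equivariant interleaving distance between `ℤ/p` persistence modules. -/
noncomputable def dHatInter (M N : ZpPersMod K p) : ℝ :=
  sInf {δ : ℝ | 0 < δ ∧ Nonempty (EquivInterleaving K p M N δ)}

/-- A `ℤ/p` persistence module is a full `p`-th power if its structure automorphism
is `B ^ p` for some endomorphism `B` of the persistence module. -/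
def IsFullPthPower (M : ZpPersMod K p) : Prop :=
  ∃ B : ∀ t : ℝ, M.V t →ₗ[K] M.V t,
    (∀ s t : ℝ, (B t).comp (M.θ s t) = (M.θ s t).comp (B s)) ∧
    ∀ t : ℝ, (B t) ^ p = M.A t

/-! ### Auxiliary lemmas -/

/-- Equivariant maps send `ζ`-eigenspaces to `ζ`-eigenspaces. -/
lemma eig_map_le {V1 V2 : Type u} [AddCommGroup V1] [Module K V1]
    [AddCommGroup V2] [Module K V2]
    (φ : V1 →ₗ[K] V2) (A1 : V1 →ₗ[K] V1) (A2 : V2 →ₗ[K] V2) (ζ : K)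
    (hφ : φ.comp A1 = A2.comp φ) :
    (LinearMap.ker (A1 - ζ • (1 : V1 →ₗ[K] V1))).map φ ≤
      LinearMap.ker (A2 - ζ • (1 : V2 →ₗ[K] V2)) := by
  rintro x ⟨v, hv, rfl⟩
  have h1 : A1 v - ζ • v = 0 := by
    simpa [LinearMap.sub_apply, LinearMap.smul_apply, Module.End.one_apply] using
      (LinearMap.mem_ker.mp hv)
  have h2 : φ (A1 v) = A2 (φ v) := by
    simpa [LinearMap.comp_apply] using LinearMap.ext_iff.mp hφ v
  have h3 : A1 v = ζ • v := by rwa [sub_eq_zero] at h1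
  simp only [SetLike.mem_coe, LinearMap.mem_ker, LinearMap.sub_apply, LinearMap.smul_apply,
    Module.End.one_apply]
  rw [← h2, h3, map_smul, sub_self]

/-- If the persistence map of `M` from `a` to `b` factors, equivariantly on the first
leg, through the persistence map of `N` from `a1` to `b1`, then the eigenspace
multiplicities compare. -/
lemma eigMult_le_of_factor (M N : ZpPersMod K p) (ζ : K) {a b a1 b1 : ℝ}
    (φ : M.V a →ₗ[K] N.V a1) (ψ : N.V b1 →ₗ[K] M.V b)
    (hφ : φ.comp (M.A a) = (N.A a1).comp φ)
    (hfact : M.θ a b = ψ.comp ((N.θ a1 b1).comp φ)) :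
    eigMult K p M ζ a b ≤ eigMult K p N ζ a1 b1 := by
  unfold eigMult
  rw [hfact, Submodule.map_comp, Submodule.map_comp]
  calc Module.finrank K
        ((((LinearMap.ker (M.A a - ζ • (1 : M.V a →ₗ[K] M.V a))).map φ).map
          (N.θ a1 b1)).map ψ)
      ≤ Module.finrank K
        (((LinearMap.ker (M.A a - ζ • (1 : M.V a →ₗ[K] M.V a))).map φ).map (N.θ a1 b1)) :=
        Submodule.finrank_map_le _ _
    _ ≤ Module.finrank K
        ((LinearMap.ker (N.A a1 - ζ • (1 : N.V a1 →ₗ[K] N.V a1))).map (N.θ a1 b1)) :=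
        Submodule.finrank_mono
          (Submodule.map_mono (eig_map_le K φ (M.A a) (N.A a1) ζ hφ))

/-- Monotonicity: enlarging the interval decreases the eigenspace multiplicity. -/
lemma eigMult_mono (M : ZpPersMod K p) (ζ : K) {a b a' b' : ℝ}
    (h1 : a' ≤ a) (h2 : a ≤ b) (h3 : b ≤ b') :
    eigMult K p M ζ a' b' ≤ eigMult K p M ζ a b := by
  refine eigMult_le_of_factor K p M M ζ (M.θ a' a) (M.θ b b') (M.hAθ a' a).symm ?_
  rw [M.θ_comp a' a b h1 h2, M.θ_comp a' b b' (h1.trans h2) h3]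

/-- The symmetry of equivariant interleavings. -/
def EquivInterleaving.symm {M N : ZpPersMod K p} {δ : ℝ}
    (E : EquivInterleaving K p M N δ) : EquivInterleaving K p N M δ :=
  ⟨E.g, E.f, E.g_nat, E.f_nat, E.g_equiv, E.f_equiv, E.fg, E.gf⟩

/-- The key inequality furnished by an equivariant interleaving. -/
lemma eigMult_interleave {M N : ZpPersMod K p} {δ : ℝ}
    (E : EquivInterleaving K p M N δ) (ζ : K) {s t : ℝ}
    (hδ : 0 ≤ δ) (h : s + δ + δ ≤ t) :
    eigMult K p M ζ s t ≤ eigMult K p N ζ (s + δ) (t - δ) := by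
  have hst : s ≤ t := by linarith
  have hs2 : s ≤ s + δ + δ := by linarith
  have ht1 : s + δ + δ ≤ t - δ + δ := by linarith
  have ht2 : t - δ + δ ≤ t := by linarith
  refine eigMult_le_of_factor K p M N ζ (E.f s)
    ((M.θ (t - δ + δ) t).comp (E.g (t - δ))) (E.f_equiv s) ?_
  apply LinearMap.ext
  intro v
  have e1 : E.g (t - δ) (N.θ (s + δ) (t - δ) (E.f s v)) =
      M.θ (s + δ + δ) (t - δ + δ) (E.g (s + δ) (E.f s v)) := by
    simpa [LinearMap.comp_apply] using
      LinearMap.ext_iff.mp (E.g_nat (s + δ) (t - δ) (by linarith)) (E.f s v)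
  have e2 : E.g (s + δ) (E.f s v) = M.θ s (s + δ + δ) v := by
    simpa [LinearMap.comp_apply] using LinearMap.ext_iff.mp (E.gf s) v
  have e3 : M.θ (t - δ + δ) t (M.θ (s + δ + δ) (t - δ + δ) (M.θ s (s + δ + δ) v)) =
      M.θ s t v := by
    have c1 : M.θ (s + δ + δ) t (M.θ s (s + δ + δ) v) = M.θ s t v := by
      simpa [LinearMap.comp_apply] using
        LinearMap.ext_iff.mp (M.θ_comp s (s + δ + δ) t hs2 h) v
    have c2 : M.θ (t - δ + δ) t (M.θ (s + δ + δ) (t - δ + δ) (M.θ s (s + δ + δ) v)) =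
        M.θ (s + δ + δ) t (M.θ s (s + δ + δ) v) := by
      simpa [LinearMap.comp_apply] using
        LinearMap.ext_iff.mp (M.θ_comp (s + δ + δ) (t - δ + δ) t ht1 ht2)
          (M.θ s (s + δ + δ) v)
    rw [c2, c1]
  simp only [LinearMap.comp_apply]
  rw [e1, e2, e3]

/-- The set defining `μ_p` is bounded above, by compact support. -/
lemma muP_bddAbove (M : ZpPersMod K p) :
    BddAbove {c : ℝ | 0 ≤ c ∧ ∃ ζ : K, IsPrimitiveRoot ζ p ∧ ∃ a b : ℝ,
      4 * c < b - a ∧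
      eigMult K p M ζ a b = eigMult K p M ζ (a + 2 * c) (b - 2 * c) ∧
      ¬ p ∣ eigMult K p M ζ a b} := by
  obtain ⟨T, hT⟩ := M.supp
  refine ⟨T / 2, ?_⟩
  rintro c ⟨hc0, ζ, hζ, a, b, hab, heq, hnd⟩
  have hl : eigMult K p M ζ a b ≠ 0 := fun h => hnd (h ▸ dvd_zero p)
  unfold eigMult at hl
  set S := LinearMap.ker (M.A a - ζ • (1 : M.V a →ₗ[K] M.V a)) with hS
  have hPne : S.map (M.θ a b) ≠ ⊥ := by
    intro h
    rw [h] at hl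
    simp at hl
  obtain ⟨x, _, hx0⟩ := (Submodule.ne_bot_iff _).mp hPne
  have hb : ¬ T < |b| := fun h => hx0 (hT b h x)
  have hSne : S ≠ ⊥ := by
    intro h
    exact hPne (by rw [h, Submodule.map_bot])
  obtain ⟨y, _, hy0⟩ := (Submodule.ne_bot_iff _).mp hSne
  have ha : ¬ T < |a| := fun h => hy0 (hT a h y)
  have hb' := abs_le.mp (not_lt.mp hb)
  have ha' := abs_le.mp (not_lt.mp ha)
  linarith [hb'.2, ha'.1]

lemma muP_nonneg (M : ZpPersMod K p) : 0 ≤ muP K p M :=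
  Real.sSup_nonneg fun _ hx => hx.1

/-- One-sided Lipschitz bound from an equivariant interleaving. -/
lemma muP_le_of_interleaving {M N : ZpPersMod K p} {δ : ℝ} (hδ : 0 < δ)
    (E : EquivInterleaving K p M N δ) :
    muP K p M ≤ muP K p N + δ := by
  refine Real.sSup_le ?_ (by linarith [muP_nonneg K p N])
  rintro c ⟨hc0, ζ, hζ, a, b, hab, heq, hnd⟩
  by_cases hcδ : c ≤ δ
  · linarith [muP_nonneg K p N]
  push_neg at hcδ
  have hA : eigMult K p M ζ a b ≤ eigMult K p N ζ (a + δ) (b - δ) :=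
    eigMult_interleave K p E ζ hδ.le (by linarith)
  have hB : eigMult K p N ζ (a + δ) (b - δ) ≤
      eigMult K p M ζ (a + δ + δ) (b - δ - δ) :=
    eigMult_interleave K p E.symm ζ hδ.le (by linarith)
  have hC : eigMult K p M ζ (a + δ + δ) (b - δ - δ) ≤
      eigMult K p M ζ (a + 2 * c) (b - 2 * c) :=
    eigMult_mono K p M ζ (by linarith) (by linarith) (by linarith)
  have hD : eigMult K p N ζ (a + δ) (b - δ) ≤
      eigMult K p N ζ (a + 2 * c - δ) (b - 2 * c + δ) :=
    eigMult_mono K p N ζ (by linarith) (by linarith) (by linarith)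
  have hE : eigMult K p N ζ (a + 2 * c - δ) (b - 2 * c + δ) ≤
      eigMult K p M ζ (a + 2 * c - δ + δ) (b - 2 * c + δ - δ) :=
    eigMult_interleave K p E.symm ζ hδ.le (by linarith)
  have ex : a + 2 * c - δ + δ = a + 2 * c := by ring
  have ey : b - 2 * c + δ - δ = b - 2 * c := by ring
  rw [ex, ey] at hE
  have h1 : eigMult K p N ζ (a + δ) (b - δ) = eigMult K p M ζ a b := by omega
  have h2 : eigMult K p N ζ (a + 2 * c - δ) (b - 2 * c + δ) = eigMult K p M ζ a b := by
    omega
  have hmem : (c - δ) ∈ {c : ℝ | 0 ≤ c ∧ ∃ ζ : K, IsPrimitiveRoot ζ p ∧ ∃ a b : ℝ,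
      4 * c < b - a ∧
      eigMult K p N ζ a b = eigMult K p N ζ (a + 2 * c) (b - 2 * c) ∧
      ¬ p ∣ eigMult K p N ζ a b} := by
    refine ⟨by linarith, ζ, hζ, a + δ, b - δ, by linarith, ?_, ?_⟩
    · have ea : a + δ + 2 * (c - δ) = a + 2 * c - δ := by ring
      have eb : b - δ - 2 * (c - δ) = b - 2 * c + δ := by ring
      rw [ea, eb, h1, h2]
    · rw [h1]; exact hnd
  have := le_csSup (muP_bddAbove K p N) hmem
  unfold muP
  linarith

/-- An equivariant interleaving always exists for large enough `δ`, by compact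
support. -/
lemma exists_equivInterleaving (M N : ZpPersMod K p) :
    ∃ δ : ℝ, 0 < δ ∧ Nonempty (EquivInterleaving K p M N δ) := by
  obtain ⟨T1, h1⟩ := M.supp
  obtain ⟨T2, h2⟩ := N.supp
  set δ := |T1| + |T2| + 1 with hδdef
  have hδpos : 0 < δ := by positivity
  refine ⟨δ, hδpos, ⟨⟨fun _ => 0, fun _ => 0, ?_, ?_, ?_, ?_, ?_, ?_⟩⟩⟩
  · intro s t _; simp
  · intro s t _; simp
  · intro t; simp
  · intro t; simp
  · intro t
    apply LinearMap.ext
    intro v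
    simp only [LinearMap.comp_apply, LinearMap.zero_apply]
    by_cases h : T1 < |t|
    · rw [h1 t h v, map_zero]
    · refine (h1 (t + δ + δ) ?_ _).symm
      have ht := abs_le.mp (not_lt.mp h)
      have : T1 < t + δ + δ := by
        have := le_abs_self T1
        have := abs_nonneg T2
        linarith [ht.1]
      exact lt_of_lt_of_le this (le_abs_self _)
  · intro t
    apply LinearMap.ext
    intro v
    simp only [LinearMap.comp_apply, LinearMap.zero_apply]
    by_cases h : T2 < |t|
    · rw [h2 t h v, map_zero]
    · refine (h2 (t + δ + δ) ?_ _).symm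
      have ht := abs_le.mp (not_lt.mp h)
      have : T2 < t + δ + δ := by
        have := le_abs_self T2
        have := abs_nonneg T1
        linarith [ht.1]
      exact lt_of_lt_of_le this (le_abs_self _)

/-- For `ℤ/p` persistence modules `V, W` (over a field `K` with
`char K ≠ p`, containing a primitive `p`-th root of unity, in which `x^p = ζ^q` has
no solution for `p ∤ q`), the multiplicity-sensitive spread satisfies
`|μ_p(V) - μ_p(W)| ≤ d̂_inter(V, W)`. -/
theorem muP_lipschitz_equivariant_interleaving
    (hp : p.Prime) (hchar : ringChar K ≠ p)
    (hroot : ∃ ζ : K, IsPrimitiveRoot ζ p)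
    (hK : ∀ ζ : K, IsPrimitiveRoot ζ p →
      ∀ q : ℤ, ¬ (p : ℤ) ∣ q → ¬ ∃ x : K, x ^ p = ζ ^ q)
    (M N : ZpPersMod K p) :
    |muP K p M - muP K p N| ≤ dHatInter K p M N := by
  have hne : {δ : ℝ | 0 < δ ∧ Nonempty (EquivInterleaving K p M N δ)}.Nonempty := by
    obtain ⟨δ, h0, hE⟩ := exists_equivInterleaving K p M N
    exact ⟨δ, h0, hE⟩
  refine le_csInf hne ?_
  rintro δ ⟨hδ0, ⟨E⟩⟩
  have h1 := muP_le_of_interleaving K p hδ0 E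
  have h2 := muP_le_of_interleaving K p hδ0 E.symm
  rw [abs_sub_le_iff]
  constructor <;> linarith
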